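/- arXiv:1907.03145 — 5 statements merged into one kernel-verified Lean document; each statement's English description precedes it below -/
import Mathlib

section
/- Let G = NEPS(G_1, …, G_n; B) for finite graphs G_1, …, G_n and a basis B ⊆ {0,1}^n, and let v_i, v_j be vertices of G. Then for every positive integer r, the number of walks of length r from v_i to v_j in G equals Σ over all r-tuples (β_1, …, β_r) ∈ B^r of the product over t = 1, …, n of w_{G_t}(β_{1t} + ⋯ + β_{rt}, π_t(v_i), π_t(v_j)), where β_ℓ = (β_{ℓ1}, …, β_{ℓn}) ∈ B, π_t denotes projection of V(G) onto V(G_t), and w_{G_t}(r', u, w) denotes the number of walks of length r' from u to w in G_t (with w_{G_t}(0, u, w) = 1 if u = w and 0 otherwise). -/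
/-- The number of walks of length `r` from `x` to `y` in the (di)graph on `V`
with adjacency relation `A`. -/
def walkCount {V : Type*} [Fintype V] [DecidableEq V] (A : V → V → Prop)
    [DecidableRel A] : ℕ → V → V → ℕ
  | 0, x, y => if x = y then 1 else 0
  | (r + 1), x, y => ∑ z : V, if A x z then walkCount A r z y else 0

/-- The adjacency relation of the NEPS of the graphs `G t` with respect to the
basis `B ⊆ {0,1}^n`: two vertices are adjacent iff there is `α ∈ B` such that
coordinates agree where `α` is `0`, and are distinct and adjacent where `α` is `1`. -/
def nepsAdj {n : ℕ} {V : Fin n → Type*} (G : ∀ t, SimpleGraph (V t))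
    (B : Finset (Fin n → Bool)) (x y : ∀ t, V t) : Prop :=
  ∃ α ∈ B, ∀ t, (α t = false → x t = y t) ∧
    (α t = true → x t ≠ y t ∧ (G t).Adj (x t) (y t))

instance {n : ℕ} {V : Fin n → Type*} [∀ t, DecidableEq (V t)]
    (G : ∀ t, SimpleGraph (V t)) [∀ t, DecidableRel (G t).Adj]
    (B : Finset (Fin n → Bool)) : DecidableRel (nepsAdj G B) := fun _ _ =>
  decidable_of_iff (∃ α ∈ B, ∀ t, _ ∧ _) Iff.rfl

section aux
variable {n : ℕ} {V : Fin n → Type*} [∀ t, Fintype (V t)]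
    [∀ t, DecidableEq (V t)] (G : ∀ t, SimpleGraph (V t))
    [∀ t, DecidableRel (G t).Adj] (B : Finset (Fin n → Bool))

/-- The per-coordinate compatibility condition. -/
abbrev nepsCond (α : Fin n → Bool) (t : Fin n) (a b : V t) : Prop :=
  (α t = false → a = b) ∧ (α t = true → a ≠ b ∧ (G t).Adj a b)

omit [∀ t, Fintype (V t)] [∀ t, DecidableEq (V t)] [∀ t, DecidableRel (G t).Adj] in
lemma nepsCond_uniq {α α' : Fin n → Bool} {x z : ∀ t, V t}
    (h : ∀ t, nepsCond G α t (x t) (z t)) (h' : ∀ t, nepsCond G α' t (x t) (z t)) :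
    α = α' := by
  funext t
  rcases h t with ⟨h1, h2⟩; rcases h' t with ⟨h1', h2'⟩
  cases hα : α t <;> cases hα' : α' t
  · rfl
  · exact absurd (h1 hα) (h2' hα').1
  · exact absurd (h1' hα') (h2 hα).1
  · rfl

lemma ite_nepsAdj (x z : ∀ t, V t) (c : ℕ) :
    (if nepsAdj G B x z then c else 0)
      = ∑ α ∈ B, if (∀ t, nepsCond G α t (x t) (z t)) then c else 0 := by
  by_cases h : nepsAdj G B x z
  · obtain ⟨α, hαB, hα⟩ := h
    rw [if_pos ⟨α, hαB, hα⟩, Finset.sum_eq_single α]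
    · rw [if_pos hα]
    · intro b _ hb
      rw [if_neg fun hP => hb (nepsCond_uniq G hP hα)]
    · intro hα'; exact absurd hαB hα'
  · rw [if_neg h, Finset.sum_eq_zero]
    intro α hαB
    rw [if_neg fun hP => h ⟨α, hαB, hP⟩]

lemma coord_step (α : Fin n → Bool) (t : Fin n) (k : ℕ) (a b : V t) :
    (∑ z : V t, if nepsCond G α t a z then walkCount (G t).Adj k z b else 0)
      = walkCount (G t).Adj ((α t).toNat + k) a b := by
  by_cases hα : α t = true
  · simp only [nepsCond, hα, Bool.toNat_true]
    rw [show 1 + k = k + 1 by omega, walkCount]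
    refine Finset.sum_congr rfl fun z _ => ?_
    congr 1
    simp only [eq_iff_iff]
    constructor
    · rintro ⟨_, h2⟩; exact (h2 trivial).2
    · intro h
      exact ⟨fun h' => by simp [hα] at h', fun _ => ⟨h.ne, h⟩⟩
  · rw [Bool.not_eq_true] at hα
    simp only [nepsCond, hα, Bool.toNat_false, zero_add]
    rw [Finset.sum_congr rfl (g := fun z => if a = z then walkCount (G t).Adj k z b else 0)
      (fun z _ => by congr 1; simp [hα])]
    simp

lemma stmt3_aux (y : ∀ t, V t) : ∀ (r : ℕ) (x : ∀ t, V t),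
    walkCount (nepsAdj G B) r x y
      = ∑ β : Fin r → B, ∏ t,
          walkCount (G t).Adj (∑ ℓ, ((β ℓ : Fin n → Bool) t).toNat) (x t) (y t) := by
  intro r
  induction r with
  | zero =>
    intro x
    rw [walkCount, Fintype.sum_unique]
    simp only [Finset.univ_eq_empty, Finset.sum_empty, walkCount]
    rw [Fintype.prod_boole]
    congr 1
    simp [funext_iff]
  | succ r ih =>
    intro x
    rw [walkCount]
    calc (∑ z, if nepsAdj G B x z then walkCount (nepsAdj G B) r z y else 0)
        = ∑ z, ∑ α ∈ B, if (∀ t, nepsCond G α t (x t) (z t))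
            then walkCount (nepsAdj G B) r z y else 0 :=
          Finset.sum_congr rfl fun z _ => ite_nepsAdj G B x z _
      _ = ∑ α ∈ B, ∑ β : Fin r → B, ∑ z : ∀ t, V t, if (∀ t, nepsCond G α t (x t) (z t))
            then ∏ t, walkCount (G t).Adj (∑ ℓ, ((β ℓ : Fin n → Bool) t).toNat) (z t) (y t)
            else 0 := by
          rw [Finset.sum_comm]
          refine Finset.sum_congr rfl fun α _ => ?_
          rw [Finset.sum_comm]
          refine Finset.sum_congr rfl fun z _ => ?_
          rw [ih z]
          split_ifs with h
          · rfl
          · simp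
      _ = ∑ α ∈ B, ∑ β : Fin r → B, ∏ t, ∑ zt : V t, if nepsCond G α t (x t) zt
            then walkCount (G t).Adj (∑ ℓ, ((β ℓ : Fin n → Bool) t).toNat) zt (y t)
            else 0 := by
          refine Finset.sum_congr rfl fun α _ => Finset.sum_congr rfl fun β _ => ?_
          rw [Fintype.prod_sum fun t zt => if nepsCond G α t (x t) zt
            then walkCount (G t).Adj (∑ ℓ, ((β ℓ : Fin n → Bool) t).toNat) zt (y t) else 0]
          exact Finset.sum_congr rfl fun z _ => by convert Fintype.prod_ite_zero.symm
      _ = ∑ α ∈ B, ∑ β : Fin r → B, ∏ t, walkCount (G t).Adj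
            ((α t).toNat + ∑ ℓ, ((β ℓ : Fin n → Bool) t).toNat) (x t) (y t) := by
          refine Finset.sum_congr rfl fun α _ => Finset.sum_congr rfl fun β _ => ?_
          exact Finset.prod_congr rfl fun t _ => coord_step G α t _ (x t) (y t)
      _ = ∑ β : Fin (r + 1) → B, ∏ t, walkCount (G t).Adj
            (∑ ℓ, ((β ℓ : Fin n → Bool) t).toNat) (x t) (y t) := by
          rw [← Finset.sum_coe_sort B]
          rw [← Fintype.sum_prod_type
            (f := fun (p : B × (Fin r → B)) => ∏ t, walkCount (G t).Adj
              (((p.1 : Fin n → Bool) t).toNat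
                + ∑ ℓ, ((p.2 ℓ : Fin n → Bool) t).toNat) (x t) (y t))]
          refine Fintype.sum_equiv (Fin.consEquiv fun _ : Fin (r + 1) => (B : Type _))
            _ _ fun p => ?_
          refine Finset.prod_congr rfl fun t _ => ?_
          congr 1
          rw [Fin.sum_univ_succ]
          simp [Fin.consEquiv]
end aux

/-- The number of walks of length `r` between two vertices of the
NEPS `G = NEPS(G₁, …, Gₙ; B)` equals the sum over all `(β₁, …, β_r) ∈ B^r` of the
product over `t` of the number of walks of length `β_{1t} + ⋯ + β_{rt}` between the
`t`-th projections of the two vertices. -/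
theorem stmt3 {n : ℕ} {V : Fin n → Type*} [∀ t, Fintype (V t)]
    [∀ t, DecidableEq (V t)] (G : ∀ t, SimpleGraph (V t))
    [∀ t, DecidableRel (G t).Adj] (B : Finset (Fin n → Bool))
    (x y : ∀ t, V t) (r : ℕ) (hr : 0 < r) :
    walkCount (nepsAdj G B) r x y
      = ∑ β : Fin r → B, ∏ t,
          walkCount (G t).Adj (∑ ℓ, ((β ℓ : Fin n → Bool) t).toNat) (x t) (y t) :=
  stmt3_aux G B y r x
end

section
/- Let G = NEPS(K_{m_1}, …, K_{m_n}; B), where K_m denotes the complete graph on m vertices, and let v_i, v_j be vertices of G. Then for every positive integer r, the number of walks of length r from v_i to v_j in G equals Σ over all (β_1, …, β_r) ∈ B^r of the product over t = 1, …, n of a_t(v_i, v_j), where, writing s_t = β_{1t} + ⋯ + β_{rt}: a_t(v_i, v_j) = ((m_t − 1)/m_t)·((m_t − 1)^{s_t − 1} − (−1)^{s_t − 1}) if π_t(v_i) = π_t(v_j), and a_t(v_i, v_j) = (1/m_t)·((m_t − 1)^{s_t} − (−1)^{s_t}) if π_t(v_i) ≠ π_t(v_j), with π_t the projection onto the t-th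 coordinate. -/
/-- The closed formula for the number of walks of length `s` between two
(equal or distinct, according to `same`) vertices of the complete graph `K_q`:
`((q-1)/q)·((q-1)^{s-1} - (-1)^{s-1})` in the equal case (interpreted as `1`
when `s = 0`) and `(1/q)·((q-1)^s - (-1)^s)` in the distinct case. -/
def aFactor (q s : ℕ) (same : Prop) [Decidable same] : ℚ :=
  if same then
    if s = 0 then 1
    else ((q : ℚ) - 1) / (q : ℚ) * (((q : ℚ) - 1) ^ (s - 1) - (-1 : ℚ) ^ (s - 1))
  else (1 / (q : ℚ)) * (((q : ℚ) - 1) ^ s - (-1 : ℚ) ^ s)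

section AuxNEPS
variable {n : ℕ} {m : Fin n → ℕ}

lemma aFactor_ite (q s : ℕ) (P : Prop) [Decidable P] :
    aFactor q s P = if P then aFactor q s True else aFactor q s False := by
  by_cases h : P <;> simp [aFactor, h]

lemma sum_ite_ne {q : ℕ} (u : Fin q) (f : Fin q → ℚ) :
    (∑ z : Fin q, if u ≠ z then f z else 0) = (∑ z : Fin q, f z) - f u := by
  have h : ∀ z, (if u ≠ z then f z else 0) = f z - (if u = z then f z else 0) := by
    intro z; by_cases h : u = z <;> simp [h]
  simp only [h, Finset.sum_sub_distrib, Finset.sum_ite_eq, Finset.mem_univ, if_true]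

lemma sum_ite_const {q : ℕ} (v : Fin q) (T F : ℚ) :
    (∑ z : Fin q, if z = v then T else F) = (q : ℚ) * F + (T - F) := by
  have h : ∀ z : Fin q, (if z = v then T else F) = F + (if z = v then T - F else 0) := by
    intro z; by_cases h : z = v <;> simp [h]
  simp only [h, Finset.sum_add_distrib, Finset.sum_const, Finset.sum_ite_eq',
    Finset.mem_univ, if_true, Finset.card_univ, Fintype.card_fin, nsmul_eq_mul]

lemma sum_aFactor (q s : ℕ) (v : Fin q) :
    (∑ z : Fin q, aFactor q s (z = v))
      = (q : ℚ) * aFactor q s False + (aFactor q s True - aFactor q s False) := by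
  rw [← sum_ite_const v]
  exact Finset.sum_congr rfl fun z _ => by by_cases h : z = v <;> simp [aFactor, h]

lemma walkK (q : ℕ) (s : ℕ) (u v : Fin q) :
    (walkCount (fun a b : Fin q => a ≠ b) s u v : ℚ) = aFactor q s (u = v) := by
  induction s generalizing u with
  | zero =>
    by_cases h : u = v <;> simp [walkCount, aFactor, h]
  | succ s ih =>
    have hq : (q : ℚ) ≠ 0 := by
      have : 0 < q := Fin.pos u
      exact_mod_cast this.ne'
    rw [show walkCount (fun a b : Fin q => a ≠ b) (s+1) u v
        = ∑ z : Fin q, if u ≠ z then walkCount (fun a b : Fin q => a ≠ b) s z v else 0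
        from rfl]
    push_cast
    simp only [ih]
    rw [sum_ite_ne u (fun z => aFactor q s (z = v)), sum_aFactor,
      aFactor_ite q s (u = v)]
    by_cases huv : u = v <;> simp only [huv, if_true, if_false, aFactor, ite_true, ite_false]
    · rcases Nat.eq_zero_or_pos s with hs | hs
      · subst hs; norm_num
      · obtain ⟨k, rfl⟩ := Nat.exists_eq_add_of_le' hs
        simp only [Nat.add_sub_cancel, if_neg (Nat.succ_ne_zero _)]
        field_simp
        ring
    · rcases Nat.eq_zero_or_pos s with hs | hs
      · subst hs; norm_num; field_simp
      · obtain ⟨k, rfl⟩ := Nat.exists_eq_add_of_le' hs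
        simp only [Nat.add_sub_cancel, if_neg (Nat.succ_ne_zero _)]
        field_simp
        ring

-- Lemma B
lemma key_step (q s : ℕ) (xt yt : Fin q) :
    (∑ z : Fin q, if xt ≠ z then aFactor q s (z = yt) else 0)
      = aFactor q (s + 1) (xt = yt) := by
  rw [← walkK q (s+1) xt yt,
    show walkCount (fun a b : Fin q => a ≠ b) (s+1) xt yt
      = ∑ z : Fin q, if xt ≠ z then walkCount (fun a b : Fin q => a ≠ b) s z yt else 0
      from rfl]
  push_cast
  simp only [walkK]

variable {n : ℕ} {m : Fin n → ℕ}

/-- the per-step condition determined by `α`. -/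
def Step (α : Fin n → Bool) (x z : ∀ t, Fin (m t)) : Prop :=
  ∀ t, (α t = false → x t = z t) ∧ (α t = true → x t ≠ z t)

instance (α : Fin n → Bool) (x z : ∀ t, Fin (m t)) : Decidable (Step α x z) := by
  unfold Step; infer_instance

lemma step_unique {α α' : Fin n → Bool} {x z : ∀ t, Fin (m t)}
    (h : Step α x z) (h' : Step α' x z) : α = α' := by
  funext t
  cases hα : α t <;> cases hα' : α' t
  · rfl
  · exact absurd ((h t).1 hα) ((h' t).2 hα')
  · exact absurd ((h' t).1 hα') ((h t).2 hα)
  · rfl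

lemma neps_top_iff (B : Finset (Fin n → Bool)) (x z : ∀ t, Fin (m t)) :
    nepsAdj (fun t => (⊤ : SimpleGraph (Fin (m t)))) B x z ↔ ∃ α ∈ B, Step α x z := by
  unfold nepsAdj Step
  simp [SimpleGraph.top_adj, and_self]

lemma ite_neps (B : Finset (Fin n → Bool)) (x z : ∀ t, Fin (m t)) (c : ℚ) :
    (if nepsAdj (fun t => (⊤ : SimpleGraph (Fin (m t)))) B x z then c else 0)
      = ∑ α ∈ B, if Step α x z then c else 0 := by
  by_cases h : nepsAdj (fun t => (⊤ : SimpleGraph (Fin (m t)))) B x z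
  · obtain ⟨α₀, hB, hs⟩ := (neps_top_iff B x z).1 h
    rw [if_pos h, Finset.sum_eq_single α₀]
    · rw [if_pos hs]
    · intro b _ hb
      rw [if_neg (fun hsb => hb (step_unique hsb hs))]
    · intro h0; exact absurd hB h0
  · rw [if_neg h]
    symm
    refine Finset.sum_eq_zero fun α hα => ?_
    rw [if_neg (fun hsa => h ((neps_top_iff B x z).2 ⟨α, hα, hsa⟩))]

lemma step_prod (α : Fin n → Bool) (x z : ∀ t, Fin (m t)) (g : ∀ t, Fin (m t) → ℚ) :
    (if Step α x z then ∏ t, g t (z t) else 0)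
      = ∏ t, if (α t = false → x t = z t) ∧ (α t = true → x t ≠ z t)
          then g t (z t) else 0 := by
  by_cases h : Step α x z
  · rw [if_pos h]
    exact Finset.prod_congr rfl fun t _ => (if_pos (h t)).symm
  · rw [if_neg h]
    obtain ⟨t, ht⟩ := not_forall.1 h
    refine (Finset.prod_eq_zero (Finset.mem_univ t) ?_).symm
    exact if_neg ht

lemma coord_sum (α : Fin n → Bool) (t : Fin n) (xt yt : Fin (m t)) (s : ℕ) :
    (∑ w : Fin (m t), if (α t = false → xt = w) ∧ (α t = true → xt ≠ w)
        then aFactor (m t) s (w = yt) else 0)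
      = aFactor (m t) ((α t).toNat + s) (xt = yt) := by
  cases hα : α t
  · refine Eq.trans (Finset.sum_congr rfl fun w _ =>
      show _ = if xt = w then aFactor (m t) s (w = yt) else 0 from ?_) ?_
    · by_cases h : xt = w <;> simp [h]
    · rw [Finset.sum_ite_eq Finset.univ xt (fun w => aFactor (m t) s (w = yt)),
        if_pos (Finset.mem_univ xt)]
      simp only [Bool.toNat_false, Nat.zero_add]
  · refine Eq.trans (Finset.sum_congr rfl fun w _ =>
      show _ = if xt ≠ w then aFactor (m t) s (w = yt) else 0 from ?_) ?_
    · by_cases h : xt = w <;> simp [h]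
    · rw [key_step, Nat.add_comm]
      simp only [Bool.toNat_true]

lemma ite_sum {c : Prop} [Decidable c] {γ : Type*} (S : Finset γ) (f : γ → ℚ) :
    (if c then ∑ b ∈ S, f b else 0) = ∑ b ∈ S, if c then f b else 0 := by
  split
  · rfl
  · simp

lemma sum_prod_pi (g : ∀ t, Fin (m t) → ℚ) :
    (∑ z : (∀ t, Fin (m t)), ∏ t, g t (z t)) = ∏ t, ∑ w : Fin (m t), g t w := by
  rw [Finset.prod_univ_sum, Fintype.piFinset_univ]

theorem stmt5' (B : Finset (Fin n → Bool))
    (x y : ∀ t, Fin (m t)) (r : ℕ) :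
    (walkCount (nepsAdj (fun t => (⊤ : SimpleGraph (Fin (m t)))) B) r x y : ℚ)
      = ∑ β : Fin r → B, ∏ t,
          aFactor (m t) (∑ ℓ, ((β ℓ : Fin n → Bool) t).toNat) (x t = y t) := by
  induction r generalizing x with
  | zero =>
    rw [show walkCount (nepsAdj (fun t => (⊤ : SimpleGraph (Fin (m t)))) B) 0 x y
      = if x = y then 1 else 0 from rfl]
    have h1 : ∀ β : Fin 0 → B,
        (∏ t, aFactor (m t) (∑ ℓ : Fin 0, ((β ℓ : Fin n → Bool) t).toNat) (x t = y t))
          = ∏ t, aFactor (m t) 0 (x t = y t) := by intro β; simp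
    rw [Finset.sum_congr rfl fun β _ => h1 β, Finset.sum_const, Finset.card_univ]
    rw [show Fintype.card (Fin 0 → B) = 1 by simp, one_smul]
    by_cases h : x = y
    · subst h; simp [aFactor]
    · obtain ⟨t, ht⟩ : ∃ t, x t ≠ y t := by
        by_contra hc; push_neg at hc; exact h (funext hc)
      rw [if_neg h]
      push_cast
      symm
      refine Finset.prod_eq_zero (Finset.mem_univ t) ?_
      simp [aFactor, ht]
  | succ r ih =>
    have hmid : (walkCount (nepsAdj (fun t => (⊤ : SimpleGraph (Fin (m t)))) B) (r+1) x y : ℚ)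
        = ∑ α ∈ B, ∑ β' : Fin r → B, ∏ t,
            aFactor (m t) ((α t).toNat + ∑ ℓ, ((β' ℓ : Fin n → Bool) t).toNat) (x t = y t) := by
      rw [show walkCount (nepsAdj (fun t => (⊤ : SimpleGraph (Fin (m t)))) B) (r+1) x y
          = ∑ z, if nepsAdj (fun t => (⊤ : SimpleGraph (Fin (m t)))) B x z
              then walkCount (nepsAdj (fun t => (⊤ : SimpleGraph (Fin (m t)))) B) r z y else 0
          from rfl]
      push_cast
      simp only [ite_neps]
      rw [Finset.sum_comm]
      refine Finset.sum_congr rfl fun α hα => ?_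
      simp only [ih]
      simp only [ite_sum]
      rw [Finset.sum_comm]
      refine Finset.sum_congr rfl fun β' _ => ?_
      refine Eq.trans (Finset.sum_congr rfl fun z _ => step_prod α x z
        (fun t w => aFactor (m t) (∑ ℓ, ((β' ℓ : Fin n → Bool) t).toNat) (w = y t))) ?_
      rw [sum_prod_pi (fun t w =>
        if (α t = false → x t = w) ∧ (α t = true → x t ≠ w) then
          aFactor (m t) (∑ ℓ, ((β' ℓ : Fin n → Bool) t).toNat) (w = y t) else 0)]
      exact Finset.prod_congr rfl fun t _ => coord_sum α t (x t) (y t) _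
    rw [hmid, ← Finset.sum_coe_sort B, ← Fintype.sum_prod_type']
    refine Fintype.sum_equiv (Fin.consEquiv fun _ => ↥B) _ _ fun p => ?_
    refine Finset.prod_congr rfl fun t _ => ?_
    have hs : (∑ ℓ : Fin (r+1), (((Fin.consEquiv fun _ => ↥B) p ℓ : Fin n → Bool) t).toNat)
        = ((p.1 : Fin n → Bool) t).toNat
          + ∑ ℓ : Fin r, ((p.2 ℓ : Fin n → Bool) t).toNat := by
      rw [Fin.sum_univ_succ]
      simp [Fin.consEquiv, Fin.cons_zero, Fin.cons_succ]
    rw [hs]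


end AuxNEPS

/-- In `G = NEPS(K_{m₁}, …, K_{mₙ}; B)`, the number of walks of
length `r` between two vertices equals the sum over all `(β₁, …, β_r) ∈ B^r` of the
product over `t` of `a_t`, where, with `s_t = β_{1t} + ⋯ + β_{rt}`:
`a_t = ((m_t - 1)/m_t)·((m_t - 1)^{s_t-1} - (-1)^{s_t-1})` if the `t`-th projections
agree, and `a_t = (1/m_t)·((m_t - 1)^{s_t} - (-1)^{s_t})` otherwise. -/
theorem stmt5 {n : ℕ} (m : Fin n → ℕ) (B : Finset (Fin n → Bool))
    (x y : ∀ t, Fin (m t)) (r : ℕ) (hr : 0 < r) :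
    (walkCount (nepsAdj (fun t => (⊤ : SimpleGraph (Fin (m t)))) B) r x y : ℚ)
      = ∑ β : Fin r → B, ∏ t,
          aFactor (m t) (∑ ℓ, ((β ℓ : Fin n → Bool) t).toNat) (x t = y t) := by
  exact stmt5' B x y r
end

section
/- Let H(n, q) denote the Hamming graph and let v_i, v_j be vertices of H(n, q). For every positive integer r, the number of walks of length r from v_i to v_j in H(n, q) equals Σ over all n-tuples (r_1, …, r_n) of nonnegative integers with r_1 + ⋯ + r_n = r of the multinomial coefficient r!/(r_1!⋯r_n!) times the product over t = 1, …, n of a_t(v_i, v_j), where a_t(v_i, v_j) = ((q − 1)/q)·((q − 1)^{r_t − 1} − (−1)^{r_t − 1}) if the t-th coordinates of v_i and v_j agree, and a_t(v_i, v_j) = (1/q)·((q − 1)^{r_t} − (−1)^{r_t}) if they differ. -/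
/-- The adjacency relation of the Hamming graph `H(n, q)` on `n`-tuples with entries
in `Δ` (of size `q`): two tuples are adjacent iff they differ in exactly one entry. -/
def hammingAdj {n : ℕ} {Δ : Type*} (x y : Fin n → Δ) : Prop :=
  ∃ t, x t ≠ y t ∧ ∀ u, u ≠ t → x u = y u

instance {n : ℕ} {Δ : Type*} [DecidableEq Δ] :
    DecidableRel (hammingAdj (n := n) (Δ := Δ)) := fun _ _ =>
  decidable_of_iff (∃ t, _ ∧ ∀ u, u ≠ t → _) Iff.rfl

/-!
The adjacency matrix of `H(n, q)` is `∑ₜ I ⊗ ⋯ ⊗ K ⊗ ⋯ ⊗ I`, with the adjacency matrix `K` of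
`K_q` in slot `t`. These summands commute, so the multinomial theorem expands the `r`-th power
into the terms `multinomial c • ⨂ₜ K ^ cₜ`, whose `(x, y)` entry is `∏ₜ (K ^ cₜ) (xₜ, yₜ)`.
Finally `K = J - I` with `J² = q • J`, so `K ^ s = (-1) ^ s • I + ((q - 1) ^ s - (-1) ^ s) / q • J`.
-/

open Finset Function Matrix SimpleGraph

namespace Matrix

variable {ι α R : Type*} [Fintype ι] [DecidableEq ι] [Fintype α] [DecidableEq α]
  [CommSemiring R]

def piKronecker : (ι → Matrix α α R) →* Matrix (ι → α) (ι → α) R where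
  toFun B := of fun x y => ∏ i, B i (x i) (y i)
  map_one' := by
    ext x y
    simp only [of_apply, Pi.one_apply, one_apply, Fintype.prod_boole, funext_iff]
  map_mul' B C := by
    ext x y
    simp only [of_apply, Pi.mul_apply, mul_apply, Fintype.prod_sum, Finset.prod_mul_distrib]

theorem piKronecker_apply (B : ι → Matrix α α R) (x y : ι → α) :
    piKronecker B x y = ∏ i, B i (x i) (y i) := rfl

theorem piKronecker_mulSingle_apply (i : ι) (A : Matrix α α R) (x y : ι → α) :
    piKronecker (Pi.mulSingle i A) x y = if ∀ j ≠ i, x j = y j then A (x i) (y i) else 0 := by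
  rw [piKronecker_apply, Fintype.prod_eq_mul_prod_compl i, Pi.mulSingle_eq_same,
    prod_congr rfl fun j hj => by rw [Pi.mulSingle_eq_of_ne (by simpa using hj), one_apply],
    prod_boole]
  simp only [mem_compl, mem_singleton, mul_ite, mul_one, mul_zero]

theorem noncommProd_pow_piKronecker_mulSingle (B : ι → Matrix α α R) (k : ι → ℕ)
    (h : ((univ : Finset ι) : Set ι).Pairwise
      (Commute on fun i => piKronecker (Pi.mulSingle i (B i)) ^ k i)) :
    univ.noncommProd (fun i => piKronecker (Pi.mulSingle i (B i)) ^ k i) h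
      = piKronecker fun i => B i ^ k i := by
  have hpow : ∀ i ∈ univ, piKronecker (Pi.mulSingle i (B i)) ^ k i
      = piKronecker (Pi.mulSingle i (B i ^ k i)) := fun i _ => by
    rw [← map_pow, Pi.mulSingle_pow]
  rw [noncommProd_congr rfl hpow, ← map_noncommProd, noncommProd_mulSingle]
  exact fun i _ j _ hij => Pi.mulSingle_commute hij _ _

end Matrix

theorem walkCount_eq_pow_apply {V R : Type*} [Fintype V] [DecidableEq V] [Semiring R]
    (A : V → V → Prop) [DecidableRel A] (r : ℕ) (x y : V) :
    (walkCount A r x y : R) = ((of fun x y => if A x y then (1 : R) else 0) ^ r) x y := by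
  induction r generalizing x with
  | zero => simp [walkCount, one_apply]
  | succ r ih => simp [walkCount, pow_succ', mul_apply, ih]

namespace SimpleGraph

variable {V : Type*} [Fintype V] [DecidableEq V]

theorem adjMatrix_completeGraph_pow {K : Type*} [Field K] (hV : (Fintype.card V : K) ≠ 0)
    (s : ℕ) :
    (completeGraph V).adjMatrix K ^ s = (-1 : K) ^ s • (1 : Matrix V V K)
      + (((Fintype.card V - 1 : K) ^ s - (-1) ^ s) / Fintype.card V) • of 1 := by
  have hJ : (of 1 : Matrix V V K) * of 1 = (Fintype.card V : K) • of 1 := by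
    ext; simp [mul_apply]
  induction s with
  | zero => simp
  | succ s ih =>
    have hcoeff : ((Fintype.card V - 1 : K) ^ (s + 1) - (-1) ^ (s + 1)) / Fintype.card V
        = (-1) ^ s + (Fintype.card V - 1)
          * (((Fintype.card V - 1 : K) ^ s - (-1) ^ s) / Fintype.card V) := by
      field_simp; ring
    rw [pow_succ, ih, adjMatrix_completeGraph_eq_of_one_sub_one, hcoeff]
    simp only [add_mul, mul_sub, smul_mul_assoc, one_mul, mul_one, hJ]
    module

theorem adjMatrix_completeGraph_pow_apply {q : ℕ} (hV : Fintype.card V = q) (s : ℕ) (d e : V) :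
    ((completeGraph V).adjMatrix ℚ ^ s) d e = aFactor q s (d = e) := by
  have : Nonempty V := ⟨d⟩
  subst hV
  have hq : (Fintype.card V : ℚ) ≠ 0 := by simp
  rw [adjMatrix_completeGraph_pow hq]
  simp only [Matrix.add_apply, Matrix.smul_apply, one_apply, of_apply, Pi.one_apply, smul_eq_mul,
    mul_ite, mul_one, mul_zero, aFactor]
  rcases s with _ | s
  · split_ifs <;> simp_all
  · simp only [Nat.add_one_ne_zero, if_false, Nat.add_sub_cancel]
    split_ifs <;> field_simp <;> ring

end SimpleGraph

theorem of_hammingAdj_eq_sum_piKronecker {n : ℕ} {Δ R : Type*} [Fintype Δ] [DecidableEq Δ]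
    [CommSemiring R] :
    (of fun x y => if hammingAdj x y then 1 else 0 : Matrix (Fin n → Δ) (Fin n → Δ) R)
      = ∑ t, piKronecker (Pi.mulSingle t ((completeGraph Δ).adjMatrix R)) := by
  ext x y
  have huniq : ∀ t u, ((∀ j ≠ t, x j = y j) ∧ x t ≠ y t) → ((∀ j ≠ u, x j = y j) ∧ x u ≠ y u) →
      t = u := by
    rintro t u ⟨-, hxyt⟩ ⟨hsame, -⟩
    by_contra htu
    exact hxyt (hsame t htu)
  simp only [of_apply, Matrix.sum_apply, piKronecker_mulSingle_apply, adjMatrix_apply, top_adj,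
    ← ite_and]
  -- `rw` fails here: `Fin n` has its own instance deciding `∀ j`, so the `ite`s differ.
  convert (Fintype.sum_ite_eq_ite_exists _ huniq (1 : R)).symm
  simp only [hammingAdj, and_comm]

theorem stmt8_general (n q : ℕ) (Δ : Type*) [Fintype Δ] [DecidableEq Δ]
    (hΔ : Fintype.card Δ = q) (x y : Fin n → Δ) (r : ℕ) :
    (walkCount (hammingAdj (n := n) (Δ := Δ)) r x y : ℚ)
      = ∑ c ∈ Finset.Nat.antidiagonalTuple n r,
          (Nat.multinomial Finset.univ c : ℚ) *
            ∏ t, aFactor q (c t) (x t = y t) := by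
  have hcomm : ((univ : Finset (Fin n)) : Set (Fin n)).Pairwise
      (Commute on fun t => piKronecker (Pi.mulSingle t ((completeGraph Δ).adjMatrix ℚ))) :=
    fun s _ t _ hst => (Pi.mulSingle_commute hst _ _).map piKronecker
  rw [walkCount_eq_pow_apply, of_hammingAdj_eq_sum_piKronecker,
    sum_pow_eq_sum_piAntidiag_of_commute _ _ hcomm, Matrix.sum_apply,
    piAntidiag_univ_fin_eq_antidiagonalTuple]
  refine sum_congr rfl fun c _ => ?_
  rw [← nsmul_eq_mul, Matrix.smul_apply, nsmul_eq_mul, noncommProd_pow_piKronecker_mulSingle,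
    piKronecker_apply]
  exact congrArg _ (prod_congr rfl fun t _ => adjMatrix_completeGraph_pow_apply hΔ _ _ _)

/-- In the Hamming graph `H(n, q)`, the number of walks of length
`r ≥ 1` between two vertices equals the sum over all `(r₁, …, rₙ)` with
`r₁ + ⋯ + rₙ = r` of the multinomial coefficient `r!/(r₁!⋯rₙ!)` times the product
over `t` of `a_t`, where `a_t = ((q-1)/q)·((q-1)^{r_t-1} - (-1)^{r_t-1})` if the
`t`-th coordinates agree, and `a_t = (1/q)·((q-1)^{r_t} - (-1)^{r_t})` otherwise. -/
theorem stmt8 (n q : ℕ) (Δ : Type*) [Fintype Δ] [DecidableEq Δ]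
    (hΔ : Fintype.card Δ = q) (x y : Fin n → Δ) (r : ℕ) (hr : 0 < r) :
    (walkCount (hammingAdj (n := n) (Δ := Δ)) r x y : ℚ)
      = ∑ c ∈ Finset.Nat.antidiagonalTuple n r,
          (Nat.multinomial Finset.univ c : ℚ) *
            ∏ t, aFactor q (c t) (x t = y t) :=
  stmt8_general n q Δ hΔ x y r
end

section
/- Let p be a prime and a, b positive integers with b > 1, and suppose k = (p^{ab} − 1)/(b(p^a − 1)) is an integer. Let ω be a primitive element of F_{p^{ab}} and for α ∈ F_{p^{ab}} let [α] = ([α]_1, …, [α]_b) ∈ (F_{p^a})^b be the coordinate vector of α with respect to the F_{p^a}-basis {1, ω^k, ω^{2k}, …, ω^{(b−1)k}} of F_{p^{ab}}. Then for each positive integer r, the number N_r of solutions (x_1, …, x_r) ∈ (F_{p^{ab}}^*)^r of x_1^k + ⋯ + x_r^k = α equals k^r times Σ over all b-tuples (r_1, …, r_b) of nonnegative integers with r_1 + ⋯ + r_b = r of the multinomial coefficient r!/(r_1!⋯r_b!) times the product over i = 1, …, b of a_i(α), where a_i(α) = ((p^a − 1)/p^a)·((p^a − 1)^{r_i − 1}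 − (−1)^{r_i − 1}) if [α]_i = 0, and a_i(α) = (1/p^a)·((p^a − 1)^{r_i} − (−1)^{r_i}) if [α]_i ≠ 0. -/
/-!
The `k`-th power map on the cyclic group `Fˣ`, of order `k · b · (q - 1)` with `q = p ^ a`, is
`k`-to-one onto its unique subgroup of order `b · (q - 1)`, and that subgroup consists exactly of
the elements `c · ω ^ (i k)` with `c ∈ Kˣ`, `i < b`, because these are `b · (q - 1)` distinct
`k`-th powers. So `N_r` is `k ^ r` times the number of tuples `(c_j, i_j)_{j < r}` with
`∑ c_j ω ^ (i_j k) = α`. Fixing the index map `j ↦ i_j` and reading off coordinates, this count is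
a product over `i` of the number `N_s(β)` of `s`-tuples of units of `K` summing to `β = [α]_i`,
where `s` is the size of the fibre over `i`. Splitting off one unit gives
`N_{s+1}(β) + N_s(β) = (q - 1) ^ s`, whose solution is `a_i(α)`. Finally, index maps with prescribed
fibre sizes are counted by multinomial coefficients, read off as coefficients of `(∑ X_i) ^ r`.
-/

open Finset

section Multinomial

variable {α ι : Type*} [Fintype α] [DecidableEq α] [Fintype ι] [DecidableEq ι]

theorem card_fun_fiber_card_eq_multinomial {c : ι → ℕ} (hc : ∑ i, c i = Fintype.card α) :
    #{f : α → ι | (fun i ↦ #{a | f a = i}) = c} = Nat.multinomial univ c := by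
  -- compare the coefficients of `X ^ c` in two expansions of `(∑ i, X i) ^ card α`
  let X : ι → AddMonoidAlgebra ℕ (ι → ℕ) := fun i ↦ .single (Pi.single i 1) 1
  have expand : (∑ i, X i) ^ Fintype.card α
      = ∑ f : α → ι, .single (fun i ↦ #{a | f a = i}) 1 := by
    rw [← card_univ, ← prod_const, prod_univ_sum, Fintype.piFinset_univ]
    refine sum_congr rfl fun f _ ↦ ?_
    rw [AddMonoidAlgebra.prod_single, prod_const_one]
    congr 1
    ext i
    simp only [Finset.sum_apply, Pi.single_apply, card_filter]
    exact sum_congr rfl fun a _ ↦ if_congr eq_comm rfl rfl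
  have multinomial : (∑ i, X i) ^ Fintype.card α
      = ∑ d ∈ piAntidiag univ (Fintype.card α), .single d (Nat.multinomial univ d) := by
    rw [sum_pow_eq_sum_piAntidiag]
    refine sum_congr rfl fun d _ ↦ ?_
    have hd : ∑ i, d i • (Pi.single i 1 : ι → ℕ) = d := by
      ext j
      simp [Finset.sum_apply, Pi.single_apply]
    simp only [X, AddMonoidAlgebra.single_pow, AddMonoidAlgebra.prod_single, one_pow,
      prod_const_one, hd, ← nsmul_eq_mul, AddMonoidAlgebra.smul_single, smul_eq_mul, mul_one]
  have coeff := congrArg (fun x ↦ x.coeff c) (expand.symm.trans multinomial)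
  simp only [AddMonoidAlgebra.coeff_sum, AddMonoidAlgebra.coeff_single, Finsupp.finsetSum_apply,
    Finsupp.single_apply] at coeff
  rwa [← card_filter, sum_ite_eq', if_pos (by simp [mem_piAntidiag, hc])] at coeff

theorem sum_fun_fiber_card_eq_sum_multinomial {R : Type*} [CommSemiring R] (g : (ι → ℕ) → R) :
    ∑ f : α → ι, g (fun i ↦ #{a | f a = i})
      = ∑ c ∈ piAntidiag univ (Fintype.card α), Nat.multinomial univ c * g c := by
  rw [← sum_fiberwise_of_maps_to (g := fun f i ↦ #{a | f a = i})
    (t := piAntidiag univ (Fintype.card α)) fun f _ ↦ ?_]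
  · refine sum_congr rfl fun c hc ↦ ?_
    rw [sum_congr rfl fun f hf ↦ by rw [(mem_filter.mp hf).2], sum_const, nsmul_eq_mul,
      card_fun_fiber_card_eq_multinomial (mem_piAntidiag.mp hc).1]
  · simp [mem_piAntidiag, ← card_eq_sum_card_fiberwise]

end Multinomial

theorem card_filter_comp_eq_pow_mul {α β ι : Type*} [Fintype α] [Fintype β] [Fintype ι]
    [DecidableEq ι] [DecidableEq β] (φ : α → β) {k : ℕ} (hφ : ∀ b, #{a | φ a = b} = k)
    (P : (ι → β) → Prop) [DecidablePred P] :
    #{v : ι → α | P (φ ∘ v)} = k ^ Fintype.card ι * #{w : ι → β | P w} := by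
  rw [card_eq_sum_card_fiberwise (f := (φ ∘ ·)) (t := {w | P w}) fun v hv ↦ by simpa using hv,
    mul_comm, ← smul_eq_mul, ← sum_const]
  refine sum_congr rfl fun w hw ↦ ?_
  have fiber : {v ∈ ({v | P (φ ∘ v)} : Finset (ι → α)) | φ ∘ v = w}
      = Fintype.piFinset fun i ↦ {a | φ a = w i} := by
    ext v
    simp only [mem_filter, mem_univ, true_and, Fintype.mem_piFinset, funext_iff,
      Function.comp_apply]
    exact ⟨And.right, fun h ↦ ⟨(funext h : φ ∘ v = w) ▸ (mem_filter.mp hw).2, h⟩⟩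
  rw [fiber, Fintype.card_piFinset, prod_congr rfl fun i _ ↦ hφ (w i), prod_const, card_univ]

section CyclicPowers

variable {G : Type*} [CommGroup G] [IsCyclic G] [Finite G]

theorem IsCyclic.range_powMonoidHom_eq_ker {k m : ℕ} (h : Nat.card G = k * m) :
    (powMonoidHom k : G →* G).range = (powMonoidHom m : G →* G).ker := by
  have hk : k ≠ 0 := left_ne_zero_of_mul (h ▸ Nat.card_pos.ne')
  refine Subgroup.eq_of_le_of_card_ge ?_ ?_
  · rintro _ ⟨x, rfl⟩
    rw [MonoidHom.mem_ker, powMonoidHom_apply, powMonoidHom_apply, ← pow_mul, ← h,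
      pow_card_eq_one']
  · rw [IsCyclic.card_powMonoidHom_ker, IsCyclic.card_powMonoidHom_range, h,
      Nat.gcd_mul_right_left, Nat.gcd_mul_left_left,
      Nat.mul_div_cancel_left m (Nat.pos_of_ne_zero hk)]

theorem IsCyclic.card_pow_eq_of_mem_range [Fintype G] [DecidableEq G] {k : ℕ}
    (hk : k ∣ Nat.card G) {y : G} (hy : y ∈ (powMonoidHom k : G →* G).range) :
    #{x | x ^ k = y} = k := by
  have fiber := MonoidHom.card_fiber_eq_of_mem_range (powMonoidHom k : G →* G) hy ⟨1, one_pow k⟩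
  simp only [powMonoidHom_apply] at fiber
  calc #{x | x ^ k = y} = Nat.card (powMonoidHom k : G →* G).ker := by
        rw [fiber, ← Fintype.card_subtype, ← Nat.card_eq_fintype_card]
        rfl
    _ = k := by rw [IsCyclic.card_powMonoidHom_ker, Nat.gcd_eq_right hk]

end CyclicPowers

section Coordinates

variable {R V ι : Type*} [Semiring R] [AddCommMonoid V] [Module R V]

theorem Module.Basis.injective_units_smul [Nontrivial R] (bas : Module.Basis ι R V) :
    Function.Injective fun u : Rˣ × ι ↦ (u.1 : R) • bas u.2 := by
  rintro ⟨c₁, i₁⟩ ⟨c₂, i₂⟩ h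
  have := congrArg bas.repr h
  simp only [map_smul, Module.Basis.repr_self, Finsupp.smul_single, smul_eq_mul, mul_one] at this
  rcases (Finsupp.single_eq_single_iff _ _ _ _).mp this with ⟨hi, hc⟩ | ⟨hc, _⟩
  · exact Prod.ext (Units.ext hc) hi
  · exact absurd hc c₁.ne_zero

variable {α : Type*} [Fintype ι] [DecidableEq ι] [Fintype α]

theorem Module.Basis.sum_smul_comp_eq_iff (bas : Module.Basis ι R V) (f : α → ι) (c : α → R)
    (v : V) : ∑ a, c a • bas (f a) = v ↔ ∀ i, ∑ a : {a // f a = i}, c a = bas.repr v i := by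
  have regroup : ∑ a, c a • bas (f a) = ∑ i, (∑ a : {a // f a = i}, c a) • bas i := by
    rw [← Fintype.sum_fiberwise f]
    refine sum_congr rfl fun i _ ↦ ?_
    rw [sum_smul]
    exact sum_congr rfl fun a _ ↦ by rw [a.2]
  rw [regroup, bas.ext_elem_iff, bas.repr_sum_self]

variable [Fintype R] [DecidableEq R] [DecidableEq V] [DecidableEq α]

theorem card_units_smul_basis_sum_eq (bas : Module.Basis ι R V) (v : V) :
    #{u : α → Rˣ × ι | ∑ a, ((u a).1 : R) • bas (u a).2 = v}
      = ∑ f : α → ι, ∏ i, #{d : {a // f a = i} → Rˣ | ∑ a, (d a : R) = bas.repr v i} := by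
  have split : #{u : α → Rˣ × ι | ∑ a, ((u a).1 : R) • bas (u a).2 = v}
      = ∑ f : α → ι, #{c : α → Rˣ | ∑ a, (c a : R) • bas (f a) = v} := by
    simp only [card_filter]
    rw [← (Equiv.arrowProdEquivProdArrow α (fun _ ↦ Rˣ) fun _ ↦ ι).symm.sum_comp,
      Fintype.sum_prod_type, sum_comm]
    rfl
  rw [split]
  refine sum_congr rfl fun f _ ↦ ?_
  rw [← Fintype.card_piFinset]
  refine card_equiv ((Equiv.arrowCongr (Equiv.sigmaFiberEquiv f).symm (Equiv.refl Rˣ)).trans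
    (Equiv.piCurry fun _ _ ↦ Rˣ)) fun c ↦ ?_
  simp [bas.sum_smul_comp_eq_iff, Sigma.curry, Equiv.arrowCongr_apply]

end Coordinates

theorem aFactor_zero (q : ℕ) (P : Prop) [Decidable P] : aFactor q 0 P = if P then 1 else 0 := by
  by_cases hP : P <;> simp [aFactor, hP]

theorem aFactor_succ {q : ℕ} (hq : q ≠ 0) (s : ℕ) (P : Prop) [Decidable P] :
    aFactor q (s + 1) P = ((q : ℚ) - 1) ^ s - aFactor q s P := by
  have hq : (q : ℚ) ≠ 0 := Nat.cast_ne_zero.mpr hq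
  by_cases hP : P
  · rcases s with _ | s
    · simp [aFactor, hP]
    · simp only [aFactor, hP, if_true, Nat.add_sub_cancel, Nat.succ_ne_zero, if_false]
      field_simp
      ring
  · simp only [aFactor, hP, if_false]
    field_simp
    ring

section UnitSums

variable {K : Type*} [Field K] [Fintype K] [DecidableEq K]

theorem card_units_val_eq (γ : K) : #{u : Kˣ | (u : K) = γ} = if γ = 0 then 0 else 1 := by
  split_ifs with hγ
  · simp [hγ]
  · rw [card_eq_one]
    exact ⟨Units.mk0 γ hγ, by ext u; simp [Units.ext_iff]⟩

theorem card_fin_succ_units_sum_add_card (s : ℕ) (β : K) :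
    #{d : Fin (s + 1) → Kˣ | ∑ i, (d i : K) = β} + #{d : Fin s → Kˣ | ∑ i, (d i : K) = β}
      = (Fintype.card K - 1) ^ s := by
  have split : #{d : Fin (s + 1) → Kˣ | ∑ i, (d i : K) = β}
      = ∑ d : Fin s → Kˣ, #{u : Kˣ | (u : K) = β - ∑ i, (d i : K)} := by
    simp only [card_filter]
    rw [← (Fin.consEquiv fun _ ↦ Kˣ).sum_comp, Fintype.sum_prod_type, sum_comm]
    refine sum_congr rfl fun d _ ↦ sum_congr rfl fun u _ ↦ ?_
    simp [Fin.sum_univ_succ, eq_sub_iff_add_eq]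
  have one : ∀ d : Fin s → Kˣ,
      #{u : Kˣ | (u : K) = β - ∑ i, (d i : K)} + (if ∑ i, (d i : K) = β then 1 else 0) = 1 := by
    intro d
    rw [card_units_val_eq]
    by_cases h : ∑ i, (d i : K) = β
    · simp [h]
    · simp [h, sub_ne_zero.mpr (Ne.symm h)]
  rw [split, card_filter, ← sum_add_distrib, sum_congr rfl fun d _ ↦ one d, sum_const, card_univ,
    Fintype.card_fun, Fintype.card_fin, Fintype.card_units, smul_eq_mul, mul_one]

theorem card_fin_units_sum_eq_aFactor (s : ℕ) (β : K) :
    (#{d : Fin s → Kˣ | ∑ i, (d i : K) = β} : ℚ) = aFactor (Fintype.card K) s (β = 0) := by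
  induction s with
  | zero => by_cases hβ : β = 0 <;> simp [aFactor_zero, hβ, eq_comm]
  | succ s ih =>
    rw [aFactor_succ Fintype.card_ne_zero, ← ih, eq_sub_iff_add_eq, ← Nat.cast_add,
      card_fin_succ_units_sum_add_card, Nat.cast_pow, Nat.cast_pred Fintype.card_pos]

theorem card_units_sum_eq_aFactor (ι : Type*) [Fintype ι] [DecidableEq ι] (β : K) :
    (#{d : ι → Kˣ | ∑ i, (d i : K) = β} : ℚ)
      = aFactor (Fintype.card K) (Fintype.card ι) (β = 0) := by
  rw [← card_fin_units_sum_eq_aFactor]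
  congr 1
  refine card_equiv ((Fintype.equivFin ι).arrowCongr (Equiv.refl Kˣ)) fun d ↦ ?_
  simp [Equiv.arrowCongr_apply, (Fintype.equivFin ι).symm.sum_comp fun i ↦ (d i : K)]

end UnitSums

section PowersInField

variable {K F ι : Type*} [Field K] [Fintype K] [DecidableEq K] [Field F] [Fintype F]
  [Algebra K F] [Fintype ι] (bas : Module.Basis ι K F) {k : ℕ}

theorem exists_equiv_range_powMonoidHom_units
    (hcard : Nat.card Fˣ = k * (Fintype.card ι * (Fintype.card K - 1)))
    (hbas : ∀ i, ∃ x : Fˣ, (x : F) ^ k = bas i) :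
    ∃ e : Kˣ × ι ≃ (powMonoidHom k : Fˣ →* Fˣ).range,
      ∀ u, ((e u : Fˣ) : F) = (u.1 : K) • bas u.2 := by
  classical
  choose x hx using hbas
  let ψ : Kˣ × ι → Fˣ := fun u ↦ Units.map (algebraMap K F : K →* F) u.1 * x u.2 ^ k
  have hψ : ∀ u, (ψ u : F) = (u.1 : K) • bas u.2 := by
    simp [ψ, Algebra.smul_def, hx]
  have ψ_mem : ∀ u, ψ u ∈ (powMonoidHom k : Fˣ →* Fˣ).range := by
    rintro ⟨c, i⟩
    refine mul_mem ?_ ⟨x i, rfl⟩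
    rw [IsCyclic.range_powMonoidHom_eq_ker hcard, MonoidHom.mem_ker, powMonoidHom_apply,
      ← map_pow, mul_comm, pow_mul, ← Fintype.card_units, pow_card_eq_one, one_pow, map_one]
  refine ⟨Equiv.ofBijective (fun u ↦ ⟨ψ u, ψ_mem u⟩) ?_, hψ⟩
  refine Function.Injective.bijective_of_nat_card_le (fun u v h ↦ ?_) ?_
  · exact bas.injective_units_smul (by simpa only [hψ] using congr((($h : Fˣ) : F)))
  · rw [IsCyclic.range_powMonoidHom_eq_ker hcard, IsCyclic.card_powMonoidHom_ker, hcard,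
      Nat.gcd_mul_left_left, Nat.card_prod, Nat.card_eq_fintype_card, Fintype.card_units,
      Nat.card_eq_fintype_card, mul_comm]

theorem card_sum_pow_eq_pow_mul_card_units_smul_basis_sum [DecidableEq F]
    (hcard : Nat.card Fˣ = k * (Fintype.card ι * (Fintype.card K - 1)))
    (hbas : ∀ i, ∃ x : Fˣ, (x : F) ^ k = bas i) (α : F) (r : ℕ) :
    #{v : Fin r → Fˣ | ∑ j, (v j : F) ^ k = α}
      = k ^ r * #{u : Fin r → Kˣ × ι | ∑ j, ((u j).1 : K) • bas (u j).2 = α} := by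
  classical
  obtain ⟨e, he⟩ := exists_equiv_range_powMonoidHom_units bas hcard hbas
  let φ : Fˣ → Kˣ × ι := fun y ↦ e.symm ((powMonoidHom k).rangeRestrict y)
  have hφ : ∀ y u, φ y = u ↔ y ^ k = e u := fun y u ↦ by
    rw [Equiv.symm_apply_eq, Subtype.ext_iff]
    rfl
  have fibers : ∀ u, #{y | φ y = u} = k := fun u ↦ by
    simp only [hφ]
    exact IsCyclic.card_pow_eq_of_mem_range (hcard ▸ dvd_mul_right _ _) (e u).2
  have value : ∀ y, ((φ y).1 : K) • bas (φ y).2 = (y : F) ^ k := fun y ↦ by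
    rw [← he, ← (hφ y _).mp rfl, Units.val_pow_eq_pow_val]
  have count := card_filter_comp_eq_pow_mul φ fibers
    (fun u : Fin r → Kˣ × ι ↦ ∑ j, ((u j).1 : K) • bas (u j).2 = α)
  rw [Fintype.card_fin] at count
  convert count using 2
  ext v
  simp [value]

end PowersInField

theorem stmt10_general (p a b k : ℕ)
    (hk : p ^ (a * b) - 1 = k * (b * (p ^ a - 1)))
    (F : Type*) [Field F] [Fintype F] [DecidableEq F]
    (hF : Fintype.card F = p ^ (a * b))
    (K : Type*) [Field K] [Fintype K] [DecidableEq K] [Algebra K F]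
    (hK : Fintype.card K = p ^ a)
    (ω : Fˣ)
    (bas : Module.Basis (Fin b) K F) (hbas : ∀ i : Fin b, bas i = (ω : F) ^ ((i : ℕ) * k))
    (α : F) (r : ℕ) :
    (Fintype.card {v : Fin r → Fˣ // ∑ i, ((v i : F)) ^ k = α} : ℚ)
      = (k : ℚ) ^ r *
          ∑ c ∈ Finset.Nat.antidiagonalTuple b r,
            (Nat.multinomial Finset.univ c : ℚ) *
              ∏ i, aFactor (p ^ a) (c i) (bas.repr α i = 0) := by
  have hcard : Nat.card Fˣ = k * (Fintype.card (Fin b) * (Fintype.card K - 1)) := by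
    rw [Nat.card_eq_fintype_card, Fintype.card_units, hF, hK, Fintype.card_fin, hk]
  have kth_powers : ∀ i, ∃ x : Fˣ, (x : F) ^ k = bas i :=
    fun i ↦ ⟨ω ^ (i : ℕ), by simp [hbas, ← pow_mul, mul_comm]⟩
  have multinomial := sum_fun_fiber_card_eq_sum_multinomial (α := Fin r)
    fun c : Fin b → ℕ ↦ ∏ i, aFactor (p ^ a) (c i) (bas.repr α i = 0)
  rw [Fintype.card_fin] at multinomial
  rw [Fintype.card_subtype, card_sum_pow_eq_pow_mul_card_units_smul_basis_sum bas hcard kth_powers,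
    card_units_smul_basis_sum_eq, ← piAntidiag_univ_fin_eq_antidiagonalTuple, ← multinomial]
  push_cast
  refine congrArg _ (sum_congr rfl fun f _ ↦ prod_congr rfl fun i _ ↦ ?_)
  rw [card_units_sum_eq_aFactor, hK, Fintype.card_subtype]

/-- Let `p` be prime, `a, b ≥ 1` with `b > 1`, and suppose
`k = (p^{ab} - 1)/(b(p^a - 1))` is an integer. With `[α] ∈ (F_{p^a})^b` the
coordinates of `α` in the basis `{1, ω^k, …, ω^{(b-1)k}}` determined by a primitive
element `ω` of `F_{p^{ab}}`, the number `N_r` of solutions `(x₁, …, x_r) ∈ (F^*)^r`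
of `x₁^k + ⋯ + x_r^k = α` equals
`k^r · Σ_{r₁+⋯+r_b=r} (r!/(r₁!⋯r_b!)) · Π_i a_i(α)`, where
`a_i(α) = ((p^a-1)/p^a)·((p^a-1)^{r_i-1} - (-1)^{r_i-1})` if `[α]_i = 0` and
`a_i(α) = (1/p^a)·((p^a-1)^{r_i} - (-1)^{r_i})` otherwise. -/
theorem stmt10 (p a b k : ℕ) (hp : p.Prime) (ha : 0 < a) (hb : 1 < b)
    (hk : p ^ (a * b) - 1 = k * (b * (p ^ a - 1)))
    (F : Type*) [Field F] [Fintype F] [DecidableEq F]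
    (hF : Fintype.card F = p ^ (a * b))
    (K : Type*) [Field K] [Fintype K] [DecidableEq K] [Algebra K F]
    (hK : Fintype.card K = p ^ a)
    (ω : Fˣ) (hω : ∀ z : Fˣ, z ∈ Subgroup.zpowers ω)
    (bas : Module.Basis (Fin b) K F) (hbas : ∀ i : Fin b, bas i = (ω : F) ^ ((i : ℕ) * k))
    (α : F) (r : ℕ) (hr : 0 < r) :
    (Fintype.card {v : Fin r → Fˣ // ∑ i, ((v i : F)) ^ k = α} : ℚ)
      = (k : ℚ) ^ r *
          ∑ c ∈ Finset.Nat.antidiagonalTuple b r,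
            (Nat.multinomial Finset.univ c : ℚ) *
              ∏ i, aFactor (p ^ a) (c i) (bas.repr α i = 0) :=
  stmt10_general p a b k hk F hF K hK ω bas hbas α r
end

section
/- Let G_1 = NEPS(K_3, K_4; {(1,1)}) be the Kronecker (tensor) product K_3 ⊗ K_4 of the complete graphs on 3 and 4 vertices. Then for every vertex v of G_1 and every positive integer r, the number of closed walks of length r at v equals (1/2)·(2^{r−1} − (−1)^{r−1})·(3^{r−1} − (−1)^{r−1}) = (6^{r−1} + (−1)^r·(2^{r−1} + 3^{r−1}) + 1)/2. -/
/-- The adjacency relation of the Kronecker (tensor) product `K₃ ⊗ K₄`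
(`= NEPS(K₃, K₄; {(1,1)})`): two pairs are adjacent iff they differ in both
coordinates. -/
def tensorAdjK3K4 (x y : Fin 3 × Fin 4) : Prop := x.1 ≠ y.1 ∧ x.2 ≠ y.2

instance : DecidableRel tensorAdjK3K4 := fun _ _ => instDecidableAnd

noncomputable def f3 (r : ℕ) (x y : Fin 3) : ℚ :=
  if x = y then (2 ^ r + 2 * (-1) ^ r) / 3 else (2 ^ r - (-1) ^ r) / 3

noncomputable def f4 (r : ℕ) (x y : Fin 4) : ℚ :=
  if x = y then (3 ^ r + 3 * (-1) ^ r) / 4 else (3 ^ r - (-1) ^ r) / 4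

lemma f3_step (r : ℕ) (v w : Fin 3) :
    (∑ z : Fin 3, if v ≠ z then f3 r z w else 0) = f3 (r + 1) v w := by
  fin_cases v <;> fin_cases w <;>
    simp [f3, Fin.sum_univ_three, pow_succ] <;> ring

lemma f4_step (r : ℕ) (v w : Fin 4) :
    (∑ z : Fin 4, if v ≠ z then f4 r z w else 0) = f4 (r + 1) v w := by
  fin_cases v <;> fin_cases w <;>
    simp [f4, Fin.sum_univ_four, pow_succ] <;> ring

lemma walkCount_eq (r : ℕ) (v w : Fin 3 × Fin 4) :
    (walkCount tensorAdjK3K4 r v w : ℚ) = f3 r v.1 w.1 * f4 r v.2 w.2 := by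
  induction r generalizing v w with
  | zero =>
      by_cases h1 : v.1 = w.1 <;> by_cases h2 : v.2 = w.2 <;>
        simp [walkCount, f3, f4, h1, h2, Prod.ext_iff] <;> norm_num
  | succ r ih =>
      have : (walkCount tensorAdjK3K4 (r + 1) v w : ℚ)
          = ∑ z : Fin 3 × Fin 4,
              if tensorAdjK3K4 v z then (walkCount tensorAdjK3K4 r z w : ℚ) else 0 := by
        rw [walkCount]
        push_cast
        simp
      rw [this]
      have hfac : ∀ z : Fin 3 × Fin 4,
          (if tensorAdjK3K4 v z then (walkCount tensorAdjK3K4 r z w : ℚ) else 0)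
            = (if v.1 ≠ z.1 then f3 r z.1 w.1 else 0) *
              (if v.2 ≠ z.2 then f4 r z.2 w.2 else 0) := by
        intro z
        by_cases h1 : v.1 = z.1 <;> by_cases h2 : v.2 = z.2 <;>
          simp [tensorAdjK3K4, h1, h2, ih]
      simp only [hfac]
      rw [Fintype.sum_prod_type]
      simp only [← Finset.sum_mul, ← Finset.mul_sum]
      rw [f3_step, f4_step]

/-- In `G₁ = NEPS(K₃, K₄; {(1,1)}) = K₃ ⊗ K₄`, the number of
closed walks of length `r ≥ 1` at every vertex `v` equals
`(1/2)·(2^{r-1} - (-1)^{r-1})·(3^{r-1} - (-1)^{r-1})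
  = (6^{r-1} + (-1)^r·(2^{r-1} + 3^{r-1}) + 1)/2`. -/
theorem stmt12 (v : Fin 3 × Fin 4) (r : ℕ) (hr : 0 < r) :
    (walkCount tensorAdjK3K4 r v v : ℚ)
        = (1 / 2) * ((2 : ℚ) ^ (r - 1) - (-1 : ℚ) ^ (r - 1)) *
            ((3 : ℚ) ^ (r - 1) - (-1 : ℚ) ^ (r - 1))
      ∧ (walkCount tensorAdjK3K4 r v v : ℚ)
        = ((6 : ℚ) ^ (r - 1) +
            (-1 : ℚ) ^ r * ((2 : ℚ) ^ (r - 1) + (3 : ℚ) ^ (r - 1)) + 1) / 2 := by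
  obtain ⟨n, rfl⟩ := Nat.exists_eq_add_of_lt hr
  simp only [Nat.zero_add] at *
  have key : (walkCount tensorAdjK3K4 (n + 1) v v : ℚ)
      = (1 / 2) * ((2 : ℚ) ^ n - (-1 : ℚ) ^ n) * ((3 : ℚ) ^ n - (-1 : ℚ) ^ n) := by
    rw [walkCount_eq]
    simp [f3, f4, pow_succ]
    ring
  have hsub : n + 1 - 1 = n := rfl
  rw [hsub]
  have hsq : (-1 : ℚ) ^ n * (-1 : ℚ) ^ n = 1 := by
    rcases Nat.even_or_odd n with h | h
    · simp [h.neg_one_pow]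
    · simp [h.neg_one_pow]
  constructor
  · exact key
  · rw [key, pow_succ]
    have h6 : (6 : ℚ) ^ n = 2 ^ n * 3 ^ n := by
      rw [show (6 : ℚ) = 2 * 3 by norm_num, mul_pow]
    linear_combination (1 / 2) * hsq - (1 / 2) * h6
end
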